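/- Let κ ≥ 3 be a cardinal and let α ≥ 1 be a countable ordinal. Then (T_κ^{[α]}, d) is a real tree and every point of T_κ^{[α]} has valence κ. -/

import Mathlib

open Set Filter

noncomputable section

/-- `C` is a valid label set for the valence cardinal `κ`:
`|C| = κ` if `κ` is infinite and `|C| + 1 = κ` (i.e. `|C| = κ - 1`) if `κ` is finite. -/
def IsLabelSet (κ : Cardinal) (C : Type) : Prop :=
  (Cardinal.aleph0 ≤ κ → Cardinal.mk C = κ) ∧ (κ < Cardinal.aleph0 → Cardinal.mk C + 1 = κ)

/-- An ordinal is countable. -/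
def IsCountableOrdinal (o : Ordinal) : Prop := o.card ≤ Cardinal.aleph0

/-- One-step Cantor–Bendixson derivative of a set: its non-isolated points. -/
def cbStep {X : Type*} [TopologicalSpace X] (A : Set X) : Set X :=
  {x | x ∈ A ∧ AccPt x (Filter.principal A)}

/-- The iterated Cantor–Bendixson derivative of a set. -/
def cbDeriv {X : Type*} [TopologicalSpace X] (A : Set X) (o : Ordinal) : Set X :=
  Ordinal.limitRecOn o A (fun _ ih => cbStep ih)
    (fun o _ ih => ⋂ (o' : Ordinal) (h : o' < o), ih o' h)

/-- The Cantor–Bendixson rank of a set: the least ordinal `γ` such that the `(γ+1)`-st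
Cantor–Bendixson derivative equals the `γ`-th one. -/
def cbRank {X : Type*} [TopologicalSpace X] (A : Set X) : Ordinal :=
  sInf {γ | cbDeriv A (γ + 1) = cbDeriv A γ}

theorem cbDeriv_zero {X : Type*} [TopologicalSpace X] (A : Set X) : cbDeriv A 0 = A :=
  Ordinal.limitRecOn_zero ..

theorem cbDeriv_one {X : Type*} [TopologicalSpace X] (A : Set X) :
    cbDeriv A 1 = cbStep A := by
  have : (1 : Ordinal) = Order.succ 0 := by
    rw [← Ordinal.add_one_eq_succ, zero_add]
  rw [cbDeriv, this, Ordinal.limitRecOn_succ]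
  rw [← cbDeriv, cbDeriv_zero]

theorem cbStep_empty {X : Type*} [TopologicalSpace X] : cbStep (∅ : Set X) = ∅ := by
  ext x; simp [cbStep]

theorem cbRank_empty {X : Type*} [TopologicalSpace X] : cbRank (∅ : Set X) = 0 := by
  refine le_antisymm ?_ zero_le
  refine csInf_le' ?_
  show cbDeriv (∅ : Set X) (0 + 1) = cbDeriv (∅ : Set X) 0
  rw [zero_add, cbDeriv_one, cbDeriv_zero, cbStep_empty]

/-- A point of Dyubina's universal real tree over the label set `C` (with distinguished label
`z`): a function `(-∞, ρ) → C`, encoded as a total function on `ℝ` which takes the value `z`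
on `[ρ, ∞)`, which is eventually `z` near `-∞` and piecewise constant from the right. -/
structure UTree (C : Type) (z : C) where
  ρ : ℝ
  f : ℝ → C
  apply_eq_of_ge : ∀ t, ρ ≤ t → f t = z
  eventually_zero : ∃ s, s ≤ ρ ∧ ∀ t, t < s → f t = z
  piecewise_const : ∀ t, t < ρ → ∃ ε > 0, ∀ u, t ≤ u → u ≤ t + ε → u < ρ → f u = f t

namespace UTree

variable {C : Type} {z : C}

theorem ext' {a b : UTree C z} (h1 : a.ρ = b.ρ) (h2 : a.f = b.f) : a = b := by
  cases a; cases b; cases h1; cases h2; rfl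

/-- The partial order `⪯` : `a ⪯ b` iff `a` is the restriction of `b` to `(-∞, ρ_a)`. -/
protected def le (a b : UTree C z) : Prop :=
  a.ρ ≤ b.ρ ∧ ∀ t, t < a.ρ → a.f t = b.f t

/-- The strict order `≺`. -/
protected def lt (a b : UTree C z) : Prop := a.le b ∧ a ≠ b

/-- The set of times up to which `a` and `b` agree. -/
def agreeSet (a b : UTree C z) : Set ℝ :=
  {t | t ≤ min a.ρ b.ρ ∧ ∀ u, u < t → a.f u = b.f u}

theorem agreeSet_nonempty (a b : UTree C z) : (agreeSet a b).Nonempty := by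
  obtain ⟨s₁, hs₁, h₁⟩ := a.eventually_zero
  obtain ⟨s₂, hs₂, h₂⟩ := b.eventually_zero
  refine ⟨min s₁ s₂, le_min ((min_le_left _ _).trans hs₁) ((min_le_right _ _).trans hs₂), ?_⟩
  intro u hu
  rw [h₁ u (lt_of_lt_of_le hu (min_le_left _ _)), h₂ u (lt_of_lt_of_le hu (min_le_right _ _))]

theorem agreeSet_bddAbove (a b : UTree C z) : BddAbove (agreeSet a b) :=
  ⟨min a.ρ b.ρ, fun _ ht => ht.1⟩

/-- `ρ_{a ∧ b}`, the height of the wedge of `a` and `b`. -/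
def wedgeρ (a b : UTree C z) : ℝ := sSup (agreeSet a b)

theorem wedgeρ_le_min (a b : UTree C z) : wedgeρ a b ≤ min a.ρ b.ρ :=
  csSup_le (agreeSet_nonempty a b) fun _ ht => ht.1

theorem agree_of_lt_wedgeρ (a b : UTree C z) {u : ℝ} (hu : u < wedgeρ a b) :
    a.f u = b.f u := by
  obtain ⟨t, ht, hut⟩ := exists_lt_of_lt_csSup (agreeSet_nonempty a b) hu
  exact ht.2 u hut

theorem le_wedgeρ {a b : UTree C z} {t : ℝ} (ht : t ∈ agreeSet a b) : t ≤ wedgeρ a b :=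
  le_csSup (agreeSet_bddAbove a b) ht

theorem wedgeρ_comm (a b : UTree C z) : wedgeρ a b = wedgeρ b a := by
  unfold wedgeρ agreeSet
  congr 1
  ext t
  constructor <;> rintro ⟨h1, h2⟩ <;>
    exact ⟨by rwa [min_comm], fun u hu => (h2 u hu).symm⟩

theorem wedgeρ_self (a : UTree C z) : wedgeρ a a = a.ρ := by
  refine le_antisymm ((wedgeρ_le_min a a).trans (by simp)) ?_
  exact le_wedgeρ ⟨by simp, fun _ _ => rfl⟩

/-- Restriction of `a` to `(-∞, s)` for `s ≤ ρ_a`. -/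
def restrict (a : UTree C z) (s : ℝ) (hs : s ≤ a.ρ) : UTree C z where
  ρ := s
  f := fun t => if t < s then a.f t else z
  apply_eq_of_ge := fun t ht => by
    show (if t < s then a.f t else z) = z
    rw [if_neg (not_lt.mpr ht)]
  eventually_zero := by
    obtain ⟨s', hs', h'⟩ := a.eventually_zero
    refine ⟨min s' s, min_le_right _ _, fun t ht => ?_⟩
    show (if t < s then a.f t else z) = z
    by_cases h : t < s
    · rw [if_pos h]; exact h' t (lt_of_lt_of_le ht (min_le_left _ _))
    · rw [if_neg h]
  piecewise_const := fun t ht => by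
    obtain ⟨ε, hε, h⟩ := a.piecewise_const t (lt_of_lt_of_le ht hs)
    refine ⟨ε, hε, fun u hu1 hu2 hu3 => ?_⟩
    show (if u < s then a.f u else z) = (if t < s then a.f t else z)
    rw [if_pos hu3, if_pos ht]
    exact h u hu1 hu2 (lt_of_lt_of_le hu3 hs)

/-- The wedge `a ∧ b`: the restriction of `a` to `(-∞, ρ_{a ∧ b})`. -/
def wedge (a b : UTree C z) : UTree C z :=
  a.restrict (wedgeρ a b) ((wedgeρ_le_min a b).trans (min_le_left _ _))

theorem min_wedgeρ_le (a b c : UTree C z) :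
    min (wedgeρ a b) (wedgeρ b c) ≤ wedgeρ a c := by
  refine le_wedgeρ ⟨le_min ?_ ?_, fun u hu => ?_⟩
  · exact (min_le_left _ _).trans ((wedgeρ_le_min a b).trans (min_le_left _ _))
  · exact (min_le_right _ _).trans ((wedgeρ_le_min b c).trans (min_le_right _ _))
  · have h1 : a.f u = b.f u :=
      agree_of_lt_wedgeρ a b (lt_of_lt_of_le hu (min_le_left _ _))
    have h2 : b.f u = c.f u :=
      agree_of_lt_wedgeρ b c (lt_of_lt_of_le hu (min_le_right _ _))
    exact h1.trans h2

/-- The metric `d(a,b) = ρ_a + ρ_b - 2 ρ_{a ∧ b}` on the universal real tree. -/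
instance : MetricSpace (UTree C z) where
  dist a b := a.ρ + b.ρ - 2 * wedgeρ a b
  dist_self a := by simp [wedgeρ_self]; ring
  dist_comm a b := by simp only [wedgeρ_comm a b]; ring
  dist_triangle a b c := by
    have hmin := min_wedgeρ_le a b c
    have h1 : wedgeρ a b ≤ b.ρ := (wedgeρ_le_min a b).trans (min_le_right _ _)
    have h2 : wedgeρ b c ≤ b.ρ := (wedgeρ_le_min b c).trans (min_le_left _ _)
    rcases min_cases (wedgeρ a b) (wedgeρ b c) with ⟨heq, hle⟩ | ⟨heq, hle⟩ <;>
      (rw [heq] at hmin; show a.ρ + c.ρ - 2 * wedgeρ a c ≤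
        (a.ρ + b.ρ - 2 * wedgeρ a b) + (b.ρ + c.ρ - 2 * wedgeρ b c); linarith)
  eq_of_dist_eq_zero := by
    intro a b h
    have h1 : wedgeρ a b ≤ a.ρ := (wedgeρ_le_min a b).trans (min_le_left _ _)
    have h2 : wedgeρ a b ≤ b.ρ := (wedgeρ_le_min a b).trans (min_le_right _ _)
    have hd : a.ρ + b.ρ - 2 * wedgeρ a b = 0 := h
    have ha : a.ρ = wedgeρ a b := by linarith
    have hb : b.ρ = wedgeρ a b := by linarith
    refine ext' (ha.trans hb.symm) (funext fun t => ?_)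
    by_cases ht : t < wedgeρ a b
    · exact agree_of_lt_wedgeρ a b ht
    · rw [a.apply_eq_of_ge t (ha.le.trans (not_lt.mp ht)),
        b.apply_eq_of_ge t (hb.le.trans (not_lt.mp ht))]

theorem dist_def (a b : UTree C z) : dist a b = a.ρ + b.ρ - 2 * wedgeρ a b := rfl

/-- The point `c_ℓ`: the constant function `(-∞, ℓ) → C` with value `z`. -/
def cconst (ℓ : ℝ) : UTree C z where
  ρ := ℓ
  f := fun _ => z
  apply_eq_of_ge := fun _ _ => rfl
  eventually_zero := ⟨ℓ, le_refl ℓ, fun _ _ => rfl⟩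
  piecewise_const := fun _ _ => ⟨1, one_pos, fun _ _ _ _ => rfl⟩

/-- The set of points at which `a` is locally non-constant from the left, whose closure is the
set `P_a`. -/
def badSet (a : UTree C z) : Set ℝ :=
  {t | t < a.ρ ∧ ∀ ε > 0, ∃ u ∈ Icc (t - ε) t, ∃ v ∈ Icc (t - ε) t, a.f u ≠ a.f v}

/-- The set `P_a`. -/
def Pset (a : UTree C z) : Set ℝ := closure (badSet a)

/-- The complexity of `a`: the Cantor–Bendixson rank of `P_a`. -/
def comp (a : UTree C z) : Ordinal := cbRank (Pset a)

/-- The complexity of a pair `a ≺ b`: the Cantor–Bendixson rank of `P_b ∩ [ρ_a, ρ_b]`. -/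
def pairComp (a b : UTree C z) : Ordinal := cbRank (Pset b ∩ Icc a.ρ b.ρ)

/-- `τ_a`: the maximum of all `s ≤ ρ_a` such that `a` is `z` below `s`. -/
def tau (a : UTree C z) : ℝ := sSup {s | s ≤ a.ρ ∧ ∀ t, t < s → a.f t = z}

/-- The tree `T_κ^{[α]}` of points of complexity at most `α`. -/
def level (z : C) (α : Ordinal) : Set (UTree C z) := {a | comp a ≤ α}

theorem Pset_cconst (ℓ : ℝ) : Pset (cconst ℓ : UTree C z) = ∅ := by
  have : badSet (cconst ℓ : UTree C z) = ∅ := by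
    ext t
    simp only [badSet, mem_setOf_eq, mem_empty_iff_false, iff_false, not_and]
    intro _
    push_neg
    exact ⟨1, one_pos, fun u _ v _ => rfl⟩
  rw [Pset, this, closure_empty]

theorem comp_cconst (ℓ : ℝ) : comp (cconst ℓ : UTree C z) = 0 := by
  rw [comp, Pset_cconst, cbRank_empty]

theorem cconst_mem_level {ℓ : ℝ} (α : Ordinal) : (cconst ℓ : UTree C z) ∈ level z α := by
  show comp _ ≤ α
  rw [comp_cconst]
  exact zero_le

/-- The canonical line `L_0 = {c_ℓ : ℓ ∈ ℝ}`. -/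
def L0 (z : C) : Set (UTree C z) := Set.range fun ℓ => (cconst ℓ : UTree C z)

/-- The extension of `a` by the label `c` on `[ρ_a, ρ_a + 1)`. -/
def extend (a : UTree C z) (c : C) : UTree C z where
  ρ := a.ρ + 1
  f := fun t => if t < a.ρ then a.f t else if t < a.ρ + 1 then c else z
  apply_eq_of_ge := fun t ht => by
    show (if t < a.ρ then a.f t else if t < a.ρ + 1 then c else z) = z
    rw [if_neg (not_lt.mpr (by linarith)), if_neg (not_lt.mpr ht)]
  eventually_zero := by
    obtain ⟨s, hs, h⟩ := a.eventually_zero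
    refine ⟨min s a.ρ, by have := min_le_right s a.ρ; linarith, fun t ht => ?_⟩
    show (if t < a.ρ then a.f t else if t < a.ρ + 1 then c else z) = z
    rw [if_pos (lt_of_lt_of_le ht (min_le_right _ _))]
    exact h t (lt_of_lt_of_le ht (min_le_left _ _))
  piecewise_const := by
    intro t ht
    by_cases htρ : t < a.ρ
    · obtain ⟨ε, hε, h⟩ := a.piecewise_const t htρ
      refine ⟨min ε ((a.ρ - t) / 2), lt_min hε (by linarith), fun u hu1 hu2 _ => ?_⟩
      have hu3 : u < a.ρ := by
        have := hu2.trans (add_le_add le_rfl (min_le_right _ _))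
        linarith
      show (if u < a.ρ then a.f u else if u < a.ρ + 1 then c else z) =
        (if t < a.ρ then a.f t else if t < a.ρ + 1 then c else z)
      rw [if_pos hu3, if_pos htρ]
      exact h u hu1 (hu2.trans (add_le_add le_rfl (min_le_left _ _))) hu3
    · refine ⟨(a.ρ + 1 - t) / 2, by linarith, fun u hu1 hu2 _ => ?_⟩
      have h1 : ¬u < a.ρ := by push_neg at htρ ⊢; linarith
      have h2 : u < a.ρ + 1 := by linarith
      show (if u < a.ρ then a.f u else if u < a.ρ + 1 then c else z) =
        (if t < a.ρ then a.f t else if t < a.ρ + 1 then c else z)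
      rw [if_neg h1, if_pos h2, if_neg htρ, if_pos ht]

end UTree

/-- A subset of a metric space is (geodesically) convex if it contains every point
metrically between two of its points. -/
def MetricConvex {X : Type*} [MetricSpace X] (S : Set X) : Prop :=
  ∀ x ∈ S, ∀ y ∈ S, ∀ w, dist x w + dist w y = dist x y → w ∈ S

/-- `D` is a direction at `x`: a connected component of the complement of `{x}`. -/
def IsDirectionAt {X : Type*} [TopologicalSpace X] (x : X) (D : Set X) : Prop :=
  ∃ y, y ≠ x ∧ D = connectedComponentIn {w | w ≠ x} y

/-- The valence of a space at a point: the number of connected components of the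
complement of that point. -/
def valenceAt {X : Type*} [TopologicalSpace X] (x : X) : Cardinal :=
  Cardinal.mk {D : Set X // IsDirectionAt x D}

/-- A real tree: a geodesic metric space in which any two points are joined by a unique arc. -/
def IsRealTree (X : Type*) [MetricSpace X] : Prop :=
  (∀ x y : X, ∃ γ : ℝ → X, γ 0 = x ∧ γ (dist x y) = y ∧
      ∀ s ∈ Icc (0 : ℝ) (dist x y), ∀ t ∈ Icc (0 : ℝ) (dist x y),
        dist (γ s) (γ t) = |s - t|) ∧
  (∀ (x y : X) (γ₁ γ₂ : Path x y), Function.Injective γ₁ → Function.Injective γ₂ →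
      Set.range γ₁ = Set.range γ₂)

/-!
The wedge heights `ρ_{a∧b}` of any three points satisfy the ultrametric inequality, and
`d(a, b) = ρ_a + ρ_b - 2ρ_{a∧b}`. The geodesic from `a` to `b` runs through restrictions of `a`
and of `b`, and every point metrically between `a` and `b` is a restriction of one of them;
restriction does not increase the Cantor–Bendixson rank of `P`, so `T_κ^{[α]}` is a convex
subset of the universal tree and inherits its real-tree structure.

At a point `c`, the direction of `q ≠ c` is either "below `c`" or the label of `q` just after
`ρ_c`. It is locally constant away from `c`, so a preconnected set avoiding `c` lies in one
direction; since a point between `a` and `b` separates their directions, preconnected sets are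
convex, and with medians this forces every arc from `a` to `b` onto the segment `[a, b]`. Each
direction is convex, hence connected, and meets `T_κ^{[α]}` (extending by a label costs
complexity at most `1 ≤ α`), so the components of the complement of a point are its
`|C| + 1 = κ` directions.
-/

open Topology

theorem Perfect.eq_empty_of_countable {X : Type*} [MetricSpace X] [CompleteSpace X] {P : Set X}
    (hP : Perfect P) (hc : P.Countable) : P = ∅ := by
  by_contra hne
  obtain ⟨f, hrange, -, hinj⟩ := hP.exists_nat_bool_injection (nonempty_iff_ne_empty.mpr hne)
  have := (hc.mono hrange).to_subtype
  have : Countable (ℕ → Bool) := (rangeFactorization_injective.mpr hinj).countable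
  rw [← Cardinal.mk_le_aleph0_iff] at this
  exact absurd this (not_le.mpr (by simpa using Cardinal.cantor Cardinal.aleph0))

section CantorBendixsonRank

variable {X : Type*} [TopologicalSpace X] {A B : Set X}

theorem cbStep_eq_inter_derivedSet (A : Set X) : cbStep A = A ∩ derivedSet A := rfl

theorem cbDeriv_add_one (A : Set X) (o : Ordinal) :
    cbDeriv A (o + 1) = cbStep (cbDeriv A o) :=
  Ordinal.limitRecOn_add_one ..

theorem cbDeriv_limit (A : Set X) {o : Ordinal} (ho : Order.IsSuccLimit o) :
    cbDeriv A o = ⋂ (o' : Ordinal) (_ : o' < o), cbDeriv A o' :=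
  Ordinal.limitRecOn_limit _ _ _ _ ho

theorem cbDeriv_anti (A : Set X) : Antitone (cbDeriv A) := by
  intro o o' h
  induction o' using Ordinal.limitRecOn with
  | zero => rw [nonpos_iff_eq_zero.mp h]
  | add_one o' ih =>
    rcases h.lt_or_eq with h | rfl
    · exact (cbDeriv_add_one A o').trans_subset (inter_subset_left.trans
        (ih (Order.lt_add_one_iff.mp h)))
    · rfl
  | limit o' ho ih =>
    rcases h.lt_or_eq with h | rfl
    · exact (cbDeriv_limit A ho).trans_subset (iInter₂_subset o h)
    · rfl

theorem cbDeriv_subset (A : Set X) (o : Ordinal) : cbDeriv A o ⊆ A :=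
  (cbDeriv_anti A (zero_le : 0 ≤ o)).trans (cbDeriv_zero A).subset

theorem cbDeriv_mono (h : A ⊆ B) (o : Ordinal) : cbDeriv A o ⊆ cbDeriv B o := by
  induction o using Ordinal.limitRecOn with
  | zero => simpa only [cbDeriv_zero] using h
  | add_one o ih =>
    simp only [cbDeriv_add_one, cbStep_eq_inter_derivedSet]
    exact inter_subset_inter ih (derivedSet_mono _ _ ih)
  | limit o ho ih =>
    rw [cbDeriv_limit A ho, cbDeriv_limit B ho]
    exact iInter₂_mono ih

theorem isClosed_cbDeriv [T1Space X] (hA : IsClosed A) (o : Ordinal) :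
    IsClosed (cbDeriv A o) := by
  induction o using Ordinal.limitRecOn with
  | zero => rwa [cbDeriv_zero]
  | add_one o ih => rw [cbDeriv_add_one]; exact ih.inter (isClosed_derivedSet _)
  | limit o ho ih => rw [cbDeriv_limit A ho]; exact isClosed_biInter ih

theorem cbDeriv_subset_of_cbStep_subset (h : cbStep A ⊆ cbStep B) {o : Ordinal} (ho : 1 ≤ o) :
    cbDeriv A o ⊆ cbDeriv B o := by
  induction o using Ordinal.limitRecOn with
  | zero => exact absurd ho (by simp)
  | add_one o ih =>
    rcases eq_zero_or_pos o with rfl | hpos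
    · simpa only [cbDeriv_add_one, cbDeriv_zero] using h
    · simp only [cbDeriv_add_one, cbStep_eq_inter_derivedSet]
      have ih := ih (Order.one_le_iff_pos.mpr hpos)
      exact inter_subset_inter ih (derivedSet_mono _ _ ih)
  | limit o ho' ih =>
    have h1 : (1 : Ordinal) < o := Ordinal.one_lt_of_isSuccLimit ho'
    rw [cbDeriv_limit A ho', cbDeriv_limit B ho']
    refine subset_iInter₂ fun o' ho'o => ?_
    rcases eq_zero_or_pos o' with rfl | hpos
    · exact (iInter₂_subset 1 h1).trans ((ih 1 h1 le_rfl).trans (cbDeriv_anti B zero_le_one))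
    · exact (iInter₂_subset o' ho'o).trans (ih o' ho'o (Order.one_le_iff_pos.mpr hpos))

theorem cbStep_union_singleton_subset [T1Space X] (hA : IsClosed A) (s : X) :
    cbStep (A ∪ {s}) ⊆ cbStep A := by
  have hs : derivedSet ({s} : Set X) = ∅ := by
    refine eq_empty_of_forall_notMem fun x hx => ?_
    obtain rfl := (isClosed_iff_derivedSet_subset _).mp isClosed_singleton hx
    obtain ⟨y, ⟨-, rfl⟩, hy⟩ := accPt_iff_nhds.mp hx univ univ_mem
    exact hy rfl
  rw [cbStep_eq_inter_derivedSet, cbStep_eq_inter_derivedSet, derivedSet_union, hs, union_empty]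
  exact subset_inter (fun x hx => (isClosed_iff_derivedSet_subset A).mp hA hx.2)
    inter_subset_right

end CantorBendixsonRank

theorem exists_cbDeriv_add_one_eq {X : Type} [TopologicalSpace X] (A : Set X) :
    ∃ γ : Ordinal, cbDeriv A (γ + 1) = cbDeriv A γ := by
  by_contra! h
  have hanti : StrictAnti (cbDeriv A) := by
    intro o o' hlt
    have hsucc : cbDeriv A o' ⊆ cbDeriv A (o + 1) := cbDeriv_anti A (Order.add_one_le_of_lt hlt)
    refine (hsucc.trans (cbDeriv_anti A le_self_add)).lt_of_ne fun heq => h o ?_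
    exact (cbDeriv_anti A le_self_add).antisymm (heq ▸ hsucc)
  exact not_small_ordinal.{0} (small_of_injective hanti.injective)

section CantorBendixsonRank

variable {X : Type} [MetricSpace X] [CompleteSpace X] {A B : Set X}

theorem cbRank_le_iff (hA : IsClosed A) (hc : A.Countable) (α : Ordinal) :
    cbRank A ≤ α ↔ cbDeriv A α = ∅ := by
  constructor
  · intro h
    obtain ⟨γ, hγ⟩ := exists_cbDeriv_add_one_eq A
    have hstab : cbDeriv A (cbRank A + 1) = cbDeriv A (cbRank A) :=
      csInf_mem (s := {γ | cbDeriv A (γ + 1) = cbDeriv A γ}) ⟨γ, hγ⟩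
    have hperf : Perfect (cbDeriv A (cbRank A)) :=
      ⟨isClosed_cbDeriv hA _, fun x hx => by
        rw [← hstab, cbDeriv_add_one] at hx
        exact hx.2⟩
    exact subset_empty_iff.mp <| (cbDeriv_anti A h).trans
      (hperf.eq_empty_of_countable (hc.mono (cbDeriv_subset A _))).subset
  · intro h
    refine csInf_le' ?_
    show cbDeriv A (α + 1) = cbDeriv A α
    rw [cbDeriv_add_one, h]
    exact subset_empty_iff.mp inter_subset_left

theorem cbRank_mono (hA : IsClosed A) (hAc : A.Countable) (hB : IsClosed B)
    (hBc : B.Countable) (h : A ⊆ B) : cbRank A ≤ cbRank B := by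
  rw [cbRank_le_iff hA hAc, ← subset_empty_iff, ← (cbRank_le_iff hB hBc _).mp le_rfl]
  exact cbDeriv_mono h _

theorem cbRank_union_singleton_le (hA : IsClosed A) (hc : A.Countable) (s : X) :
    cbRank (A ∪ {s}) ≤ max (cbRank A) 1 := by
  rw [cbRank_le_iff (hA.union isClosed_singleton) (hc.union (countable_singleton s)),
    ← subset_empty_iff, ← (cbRank_le_iff hA hc _).mp (le_max_left _ 1)]
  exact cbDeriv_subset_of_cbStep_subset (cbStep_union_singleton_subset hA s) (le_max_right _ _)

end CantorBendixsonRank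

section RealTree

def IsGeodesicSpace (X : Type*) [MetricSpace X] : Prop :=
  ∀ x y : X, ∃ γ : ℝ → X, γ 0 = x ∧ γ (dist x y) = y ∧
    ∀ s ∈ Icc (0 : ℝ) (dist x y), ∀ t ∈ Icc (0 : ℝ) (dist x y), dist (γ s) (γ t) = |s - t|

def HasUniqueArcs (X : Type*) [TopologicalSpace X] : Prop :=
  ∀ (x y : X) (γ₁ γ₂ : Path x y), Function.Injective γ₁ → Function.Injective γ₂ →
    range γ₁ = range γ₂

variable {X : Type*} [MetricSpace X]

theorem dist_add_dist_eq_of_isometricOn {x y : X} {γ : ℝ → X} (h0 : γ 0 = x)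
    (h1 : γ (dist x y) = y)
    (hγ : ∀ s ∈ Icc (0 : ℝ) (dist x y), ∀ t ∈ Icc (0 : ℝ) (dist x y), dist (γ s) (γ t) = |s - t|)
    {s : ℝ} (hs : s ∈ Icc 0 (dist x y)) : dist x (γ s) + dist (γ s) y = dist x y := by
  have hx := hγ 0 (left_mem_Icc.mpr dist_nonneg) s hs
  have hy := hγ s hs _ (right_mem_Icc.mpr dist_nonneg)
  rw [h0] at hx
  rw [h1] at hy
  rw [hx, hy, zero_sub, abs_neg, abs_of_nonneg hs.1, abs_of_nonpos (by linarith [hs.2])]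
  ring

theorem dist_add_dist_eq_comm {x y w : X} :
    dist x w + dist w y = dist x y ↔ dist y w + dist w x = dist y x := by
  rw [dist_comm y w, dist_comm w x, dist_comm y x, add_comm]

theorem dist_add_dist_eq_of_dist_add_dist_eq {x y w r : X} (hw : dist x w + dist w y = dist x y)
    (hr : dist x r + dist r w = dist x w) : dist x r + dist r y = dist x y :=
  le_antisymm (by linarith [dist_triangle r w y]) (dist_triangle x r y)

theorem MetricConvex.inter {S T : Set X} (hS : MetricConvex S) (hT : MetricConvex T) :
    MetricConvex (S ∩ T) :=
  fun x hx y hy w h => ⟨hS x hx.1 y hy.1 w h, hT x hx.2 y hy.2 w h⟩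

theorem IsGeodesicSpace.exists_isPreconnected (hX : IsGeodesicSpace X) (x y : X) :
    ∃ T : Set X, IsPreconnected T ∧ x ∈ T ∧ y ∈ T ∧ ∀ w ∈ T, dist x w + dist w y = dist x y := by
  obtain ⟨γ, h0, h1, hγ⟩ := hX x y
  have hcont : ContinuousOn γ (Icc 0 (dist x y)) :=
    (LipschitzOnWith.of_dist_le_mul (K := 1) fun s hs t ht => by
      rw [hγ s hs t ht, NNReal.coe_one, one_mul, Real.dist_eq]).continuousOn
  refine ⟨γ '' Icc 0 (dist x y), isPreconnected_Icc.image γ hcont,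
    ⟨0, left_mem_Icc.mpr dist_nonneg, h0⟩, ⟨_, right_mem_Icc.mpr dist_nonneg, h1⟩, ?_⟩
  rintro _ ⟨s, hs, rfl⟩
  exact dist_add_dist_eq_of_isometricOn h0 h1 hγ hs

theorem IsGeodesicSpace.isPreconnected (hX : IsGeodesicSpace X) {S : Set X}
    (hS : MetricConvex S) : IsPreconnected S := by
  refine isPreconnected_of_forall_pair fun x hx y hy => ?_
  obtain ⟨T, hT, hxT, hyT, hTxy⟩ := hX.exists_isPreconnected x y
  exact ⟨T, fun w hw => hS x hx y hy w (hTxy w hw), hxT, hyT, hT⟩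

theorem IsGeodesicSpace.subtype (hX : IsGeodesicSpace X) {S : Set X} (hS : MetricConvex S) :
    IsGeodesicSpace S := by
  intro x y
  rw [Subtype.dist_eq]
  obtain ⟨γ, h0, h1, hγ⟩ := hX x y
  have hd : (0 : ℝ) ≤ dist (x : X) y := dist_nonneg
  have hmem : ∀ s ∈ Icc 0 (dist (x : X) y), γ s ∈ S := fun s hs =>
    hS x x.2 y y.2 _ (dist_add_dist_eq_of_isometricOn h0 h1 hγ hs)
  refine ⟨fun t => ⟨γ (projIcc 0 _ hd t), hmem _ (projIcc 0 _ hd t).2⟩, ?_, ?_, ?_⟩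
  · exact Subtype.ext (by simpa [projIcc_left] using h0)
  · exact Subtype.ext (by simpa [projIcc_right] using h1)
  · intro s hs t ht
    simpa only [Subtype.dist_eq, projIcc_of_mem hd hs, projIcc_of_mem hd ht] using hγ s hs t ht

theorem HasUniqueArcs.subtype (hX : HasUniqueArcs X) (S : Set X) : HasUniqueArcs S := by
  intro x y γ₁ γ₂ h₁ h₂
  have := hX x y (γ₁.map continuous_subtype_val) (γ₂.map continuous_subtype_val)
    (Subtype.val_injective.comp h₁) (Subtype.val_injective.comp h₂)
  simp only [Path.map_coe, range_comp] at this
  exact image_injective.mpr Subtype.val_injective this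

theorem IsRealTree.subtype (hX : IsRealTree X) {S : Set X} (hS : MetricConvex S) :
    IsRealTree S :=
  ⟨IsGeodesicSpace.subtype hX.1 hS, HasUniqueArcs.subtype hX.2 S⟩

end RealTree

namespace UTree

variable {C : Type} {z : C} {a b c p q q' : UTree C z}

section Geodesics

theorem wedgeρ_le_left (a b : UTree C z) : wedgeρ a b ≤ a.ρ :=
  (wedgeρ_le_min a b).trans (min_le_left _ _)

theorem wedgeρ_le_right (a b : UTree C z) : wedgeρ a b ≤ b.ρ :=
  (wedgeρ_le_min a b).trans (min_le_right _ _)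

theorem lt_wedgeρ_of_agree {t : ℝ} (ha : t < a.ρ) (hb : t < b.ρ)
    (hagree : ∀ u < t, a.f u = b.f u) (ht : a.f t = b.f t) : t < wedgeρ a b := by
  obtain ⟨ε₁, hε₁, h₁⟩ := a.piecewise_const t ha
  obtain ⟨ε₂, hε₂, h₂⟩ := b.piecewise_const t hb
  set δ := min (min ε₁ ε₂) (min (a.ρ - t) (b.ρ - t))
  have hδ : 0 < δ := lt_min (lt_min hε₁ hε₂) (lt_min (by linarith) (by linarith))
  have hδ₁ : δ ≤ ε₁ := (min_le_left _ _).trans (min_le_left _ _)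
  have hδ₂ : δ ≤ ε₂ := (min_le_left _ _).trans (min_le_right _ _)
  have hδa : δ ≤ a.ρ - t := (min_le_right _ _).trans (min_le_left _ _)
  have hδb : δ ≤ b.ρ - t := (min_le_right _ _).trans (min_le_right _ _)
  refine lt_of_lt_of_le (by linarith) (le_wedgeρ (t := t + δ) ⟨le_min (by linarith) (by linarith),
    fun u hu => ?_⟩)
  rcases lt_or_ge u t with hut | htu
  · exact hagree u hut
  · rw [h₁ u htu (by linarith) (by linarith), h₂ u htu (by linarith) (by linarith), ht]

theorem eq_of_wedgeρ_eq (h : wedgeρ a b = a.ρ) (hρ : a.ρ = b.ρ) : a = b := by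
  refine ext' hρ (funext fun t => ?_)
  rcases lt_or_ge t a.ρ with ht | ht
  · exact agree_of_lt_wedgeρ a b (h ▸ ht)
  · rw [a.apply_eq_of_ge t ht, b.apply_eq_of_ge t (hρ ▸ ht)]

theorem ρ_lt_of_wedgeρ_eq (h : wedgeρ a b = b.ρ) (hne : a ≠ b) : b.ρ < a.ρ :=
  (h ▸ wedgeρ_le_left a b).lt_of_ne fun hρ =>
    hne (eq_of_wedgeρ_eq (h.trans hρ) hρ.symm)

theorem restrict_f_of_lt {s t : ℝ} (hs : s ≤ a.ρ) (ht : t < s) :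
    (a.restrict s hs).f t = a.f t := if_pos ht

theorem restrict_eq_self {s : ℝ} (hs : s ≤ a.ρ) (h : s = a.ρ) : a.restrict s hs = a := by
  refine ext' h (funext fun t => ?_)
  by_cases ht : t < s
  · exact if_pos ht
  · exact (if_neg ht).trans (a.apply_eq_of_ge t (h ▸ not_lt.mp ht)).symm

theorem restrict_eq_restrict {s : ℝ} (h : s ≤ wedgeρ a b) (ha : s ≤ a.ρ) (hb : s ≤ b.ρ) :
    a.restrict s ha = b.restrict s hb := by
  refine ext' rfl (funext fun t => ?_)
  by_cases ht : t < s
  · rw [restrict_f_of_lt ha ht, restrict_f_of_lt hb ht]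
    exact agree_of_lt_wedgeρ a b (lt_of_lt_of_le ht h)
  · exact (if_neg ht).trans (if_neg ht).symm

theorem wedgeρ_restrict_restrict {s s' : ℝ} (hs : s ≤ a.ρ) (hs' : s' ≤ b.ρ) :
    wedgeρ (a.restrict s hs) (b.restrict s' hs') = min (min s s') (wedgeρ a b) := by
  apply le_antisymm
  · refine csSup_le (agreeSet_nonempty _ _) fun t ht => le_min ht.1 (le_wedgeρ ⟨?_, fun u hu => ?_⟩)
    · exact le_min (ht.1.trans ((min_le_left _ _).trans hs))
        (ht.1.trans ((min_le_right _ _).trans hs'))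
    · have hus : u < s := lt_of_lt_of_le hu (ht.1.trans (min_le_left _ _))
      have hus' : u < s' := lt_of_lt_of_le hu (ht.1.trans (min_le_right _ _))
      simpa only [restrict_f_of_lt hs hus, restrict_f_of_lt hs' hus'] using ht.2 u hu
  · refine le_wedgeρ ⟨min_le_left _ _, fun u hu => ?_⟩
    have hu' : u < min s s' := lt_of_lt_of_le hu (min_le_left _ _)
    rw [restrict_f_of_lt hs (lt_of_lt_of_le hu' (min_le_left _ _)),
      restrict_f_of_lt hs' (lt_of_lt_of_le hu' (min_le_right _ _))]
    exact agree_of_lt_wedgeρ a b (lt_of_lt_of_le hu (min_le_right _ _))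

theorem wedgeρ_restrict_left {s : ℝ} (hs : s ≤ a.ρ) :
    wedgeρ (a.restrict s hs) b = min s (wedgeρ a b) := by
  have := wedgeρ_restrict_restrict hs (le_refl b.ρ)
  rwa [restrict_eq_self _ rfl, min_assoc, min_eq_right (wedgeρ_le_right a b)] at this

theorem dist_restrict_restrict_self {s s' : ℝ} (hs : s ≤ a.ρ) (hs' : s' ≤ a.ρ) :
    dist (a.restrict s hs) (a.restrict s' hs') = |s - s'| := by
  rw [dist_def, wedgeρ_restrict_restrict, wedgeρ_self,
    min_eq_left ((min_le_left _ _).trans hs)]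
  change s + s' - 2 * min s s' = |s - s'|
  rcases le_total s s' with h | h
  · rw [min_eq_left h, abs_of_nonpos (by linarith)]; ring
  · rw [min_eq_right h, abs_of_nonneg (by linarith)]; ring

theorem dist_restrict_restrict_of_wedgeρ_le {s s' : ℝ} (hs : s ≤ a.ρ) (hs' : s' ≤ b.ρ)
    (h : wedgeρ a b ≤ s) (h' : wedgeρ a b ≤ s') :
    dist (a.restrict s hs) (b.restrict s' hs') = s + s' - 2 * wedgeρ a b := by
  rw [dist_def, wedgeρ_restrict_restrict, min_eq_right (le_min h h')]
  rfl

/-- The geodesic from `a` to `b` descends from `a` to the branch point `a ∧ b`, then climbs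
to `b`. -/
def segment (a b : UTree C z) (t : Icc (0 : ℝ) (dist a b)) : UTree C z :=
  if (t : ℝ) ≤ a.ρ - wedgeρ a b then a.restrict (a.ρ - t) (sub_le_self _ t.2.1)
  else b.restrict (t + 2 * wedgeρ a b - a.ρ) (by linarith [t.2.2, dist_def a b])

theorem isometry_segment (a b : UTree C z) : Isometry (segment a b) := by
  refine Isometry.of_dist_eq fun s t => ?_
  have hwa := wedgeρ_le_left a b
  have hba := wedgeρ_comm b a
  rw [Subtype.dist_eq, Real.dist_eq]
  unfold segment
  split_ifs with hs ht ht
  · rw [dist_restrict_restrict_self, abs_sub_comm]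
    ring_nf
  · rw [dist_restrict_restrict_of_wedgeρ_le _ _ (by linarith) (by linarith),
      abs_of_nonpos (by linarith)]
    ring
  · rw [dist_restrict_restrict_of_wedgeρ_le _ _ (by linarith) (by linarith),
      abs_of_nonneg (by linarith)]
    linarith
  · rw [dist_restrict_restrict_self]
    ring_nf

theorem segment_left (a b : UTree C z) :
    segment a b ⟨0, left_mem_Icc.mpr dist_nonneg⟩ = a := by
  rw [segment, if_pos (by linarith [wedgeρ_le_left a b])]
  exact restrict_eq_self _ (sub_zero _)

theorem segment_right (a b : UTree C z) :
    segment a b ⟨dist a b, right_mem_Icc.mpr dist_nonneg⟩ = b := by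
  have hd := dist_def a b
  have hwb := wedgeρ_le_right a b
  unfold segment
  split_ifs with h
  · have hb : b.ρ = wedgeρ a b := by linarith
    rw [restrict_eq_restrict (b := b) (by linarith) _ (by linarith)]
    exact restrict_eq_self _ (by linarith)
  · exact restrict_eq_self _ (by linarith)

theorem isGeodesicSpace : IsGeodesicSpace (UTree C z) := by
  intro a b
  refine ⟨IccExtend dist_nonneg (segment a b), ?_, ?_, fun s hs t ht => ?_⟩
  · rw [IccExtend_left, segment_left]
  · rw [IccExtend_right, segment_right]
  · rw [IccExtend_of_mem _ _ hs, IccExtend_of_mem _ _ ht, (isometry_segment a b).dist_eq,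
      Subtype.dist_eq, Real.dist_eq]

end Geodesics

section Directions

theorem dist_add_dist_eq_iff :
    dist a q + dist q b = dist a b ↔ q.ρ + wedgeρ a b = wedgeρ a q + wedgeρ q b := by
  rw [dist_def, dist_def, dist_def]
  constructor <;> intro h <;> linarith

theorem wedgeρ_eq_of_dist_add_dist_eq (h : dist a q + dist q b = dist a b)
    (hle : wedgeρ a q ≤ wedgeρ q b) : wedgeρ q b = q.ρ ∧ wedgeρ a b = wedgeρ a q := by
  rw [dist_add_dist_eq_iff] at h
  have hmin := min_wedgeρ_le a q b
  rw [min_eq_left hle] at hmin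
  have := wedgeρ_le_left q b
  constructor <;> linarith

/-- `none` is the direction towards `-∞`, containing every point that does not extend `c`;
`some v` contains the extensions of `c` with label `v` just after `ρ_c`. The value at `q = c`
is meaningless. -/
def direction (c q : UTree C z) : Option C :=
  if wedgeρ q c < c.ρ then none else some (q.f c.ρ)

theorem direction_of_lt (h : wedgeρ q c < c.ρ) : direction c q = none := if_pos h

theorem direction_eq_none_iff : direction c q = none ↔ wedgeρ q c < c.ρ := by
  unfold direction
  split_ifs with h <;> simp [h]

theorem direction_eq_some_iff {v : C} :
    direction c q = some v ↔ c.ρ ≤ wedgeρ q c ∧ q.f c.ρ = v := by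
  unfold direction
  split_ifs with h <;> simp [h, not_lt.mp]

theorem ne_of_direction_eq_none (h : direction c q = none) : q ≠ c := by
  rintro rfl
  exact (direction_eq_none_iff.mp h).ne (wedgeρ_self q)

theorem direction_eq_of_lt_wedgeρ (h : c.ρ < wedgeρ q q') : direction c q = direction c q' := by
  have h₁ := min_wedgeρ_le q q' c
  have h₂ := min_wedgeρ_le q' q c
  rw [min_eq_right (lt_of_le_of_lt (wedgeρ_le_right q' c) h).le] at h₁
  rw [wedgeρ_comm q' q, min_eq_right (lt_of_le_of_lt (wedgeρ_le_right q c) h).le] at h₂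
  simp only [direction, le_antisymm h₂ h₁, agree_of_lt_wedgeρ q q' h]

theorem lt_wedgeρ_of_direction_eq (hq : q ≠ c) (hq' : q' ≠ c) (hup : c.ρ ≤ wedgeρ q c)
    (h : direction c q = direction c q') : c.ρ < wedgeρ q q' := by
  have hqc : wedgeρ q c = c.ρ := le_antisymm (wedgeρ_le_right q c) hup
  obtain ⟨hup', hlabel⟩ := direction_eq_some_iff.mp (h ▸ direction_eq_some_iff.mpr ⟨hup, rfl⟩)
  have hq'c : wedgeρ q' c = c.ρ := le_antisymm (wedgeρ_le_right q' c) hup'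
  refine lt_wedgeρ_of_agree (ρ_lt_of_wedgeρ_eq hqc hq) (ρ_lt_of_wedgeρ_eq hq'c hq')
    (fun u hu => ?_) hlabel.symm
  rw [agree_of_lt_wedgeρ q c (hqc ▸ hu), agree_of_lt_wedgeρ q' c (hq'c ▸ hu)]

theorem eventually_direction_eq (hq : q ≠ c) :
    ∀ᶠ q' in 𝓝 q, q' ≠ c ∧ direction c q' = direction c q := by
  rw [Metric.eventually_nhds_iff]
  by_cases hlt : wedgeρ q c < c.ρ
  · refine ⟨c.ρ - wedgeρ q c, by linarith, fun q' hq' => ?_⟩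
    have hq'c : wedgeρ q' c < c.ρ := by
      have := min_wedgeρ_le q q' c
      have := wedgeρ_le_left q q'
      have := wedgeρ_le_left q' c
      rw [dist_comm, dist_def] at hq'
      rcases min_cases (wedgeρ q q') (wedgeρ q' c) with ⟨he, -⟩ | ⟨he, -⟩ <;> linarith
    exact ⟨ne_of_direction_eq_none (direction_of_lt hq'c),
      (direction_of_lt hq'c).trans (direction_of_lt hlt).symm⟩
  · have hqc : wedgeρ q c = c.ρ := le_antisymm (wedgeρ_le_right q c) (not_lt.mp hlt)
    have hρ := ρ_lt_of_wedgeρ_eq hqc hq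
    refine ⟨q.ρ - c.ρ, by linarith, fun q' hq' => ?_⟩
    have hw : c.ρ < wedgeρ q q' := by
      have := wedgeρ_le_right q q'
      rw [dist_comm, dist_def] at hq'
      linarith
    exact ⟨fun h => (hw.trans_le (wedgeρ_le_right q q')).ne (congrArg ρ h).symm,
      (direction_eq_of_lt_wedgeρ hw).symm⟩

theorem isOpen_setOf_ne_and_direction (c : UTree C z) (P : Option C → Prop) :
    IsOpen {q | q ≠ c ∧ P (direction c q)} := by
  refine isOpen_iff_eventually.mpr fun q ⟨hq, hP⟩ => ?_
  filter_upwards [eventually_direction_eq hq] with q' ⟨hq'c, hdir⟩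
  exact ⟨hq'c, hdir ▸ hP⟩

theorem direction_eq_of_isPreconnected {T : Set (UTree C z)} (hT : IsPreconnected T)
    (hc : c ∉ T) (hp : p ∈ T) (hq : q ∈ T) : direction c p = direction c q := by
  by_contra hne
  have hne_c : ∀ r ∈ T, r ≠ c := fun r hr h => hc (h ▸ hr)
  obtain ⟨r, -, hr₁, hr₂⟩ := hT _ _ (isOpen_setOf_ne_and_direction c (· = direction c p))
    (isOpen_setOf_ne_and_direction c (· ≠ direction c p))
    (fun r hr => (em (direction c r = direction c p)).imp (⟨hne_c r hr, ·⟩) (⟨hne_c r hr, ·⟩))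
    ⟨p, hp, hne_c p hp, rfl⟩ ⟨q, hq, hne_c q hq, Ne.symm hne⟩
  exact hr₂.2 hr₁.2

theorem direction_ne_of_dist_add_dist_eq (h : dist a q + dist q b = dist a b) (ha : a ≠ q)
    (hb : b ≠ q) : direction q a ≠ direction q b := by
  wlog hle : wedgeρ a q ≤ wedgeρ q b generalizing a b
  · refine (this (dist_add_dist_eq_comm.mp h) hb ha ?_).symm
    rw [wedgeρ_comm b q, wedgeρ_comm q a]
    exact (not_le.mp hle).le
  obtain ⟨hqb, hab⟩ := wedgeρ_eq_of_dist_add_dist_eq h hle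
  intro hdir
  have := lt_wedgeρ_of_direction_eq hb ha (by rw [wedgeρ_comm, hqb]) hdir.symm
  rw [wedgeρ_comm, hab] at this
  exact (wedgeρ_le_right a q).not_gt this

theorem mem_of_isPreconnected_of_dist_add_dist_eq {T : Set (UTree C z)} (hT : IsPreconnected T)
    (ha : a ∈ T) (hb : b ∈ T) (h : dist a c + dist c b = dist a b) : c ∈ T := by
  by_contra hc
  exact direction_ne_of_dist_add_dist_eq h (fun h => hc (h ▸ ha)) (fun h => hc (h ▸ hb))
    (direction_eq_of_isPreconnected hT hc ha hb)

end Directions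

section Arcs

theorem exists_median_of_wedgeρ_le (h₁ : wedgeρ a b ≤ wedgeρ a p)
    (h₂ : wedgeρ b p ≤ wedgeρ a p) : ∃ c, dist a c + dist c b = dist a b ∧
      dist a c + dist c p = dist a p ∧ dist b c + dist c p = dist b p := by
  have ha := wedgeρ_le_left a p
  refine ⟨a.restrict (wedgeρ a p) ha, ?_⟩
  have hca : wedgeρ (a.restrict (wedgeρ a p) ha) a = wedgeρ a p := by
    rw [wedgeρ_restrict_left, wedgeρ_self, min_eq_left ha]
  have hcb : wedgeρ (a.restrict (wedgeρ a p) ha) b = wedgeρ a b := by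
    rw [wedgeρ_restrict_left, min_eq_right h₁]
  have hcp : wedgeρ (a.restrict (wedgeρ a p) ha) p = wedgeρ a p := by
    rw [wedgeρ_restrict_left, min_self]
  have hbp : wedgeρ b p = wedgeρ a b := by
    have hb := min_wedgeρ_le b a p
    have hp := min_wedgeρ_le a p b
    rw [wedgeρ_comm b a, min_eq_left h₁] at hb
    rw [wedgeρ_comm p b, min_eq_right h₂] at hp
    exact le_antisymm hp hb
  simp only [dist_add_dist_eq_iff, wedgeρ_comm a (a.restrict _ ha), wedgeρ_comm b (a.restrict _ ha),
    hca, hcb, hcp, hbp]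
  exact ⟨rfl, rfl, add_comm _ _⟩

theorem exists_median (a b p : UTree C z) : ∃ c, dist a c + dist c b = dist a b ∧
    dist a c + dist c p = dist a p ∧ dist b c + dist c p = dist b p := by
  rcases le_total (wedgeρ b p) (wedgeρ a p) with h | h
  · rcases le_total (wedgeρ a b) (wedgeρ a p) with h' | h'
    · exact exists_median_of_wedgeρ_le h' h
    · obtain ⟨c, h₁, h₂, h₃⟩ := exists_median_of_wedgeρ_le (b := p) (p := b) h'
        (by rw [wedgeρ_comm]; exact h.trans h')
      exact ⟨c, h₂, h₁, dist_add_dist_eq_comm.mp h₃⟩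
  · rcases le_total (wedgeρ a b) (wedgeρ b p) with h' | h'
    · obtain ⟨c, h₁, h₂, h₃⟩ := exists_median_of_wedgeρ_le (a := b) (b := a) (p := p)
        (by rwa [wedgeρ_comm]) h
      exact ⟨c, dist_add_dist_eq_comm.mp h₁, h₃, h₂⟩
    · obtain ⟨c, h₁, h₂, h₃⟩ := exists_median_of_wedgeρ_le (b := p) (p := b) (h.trans h')
        (by rw [wedgeρ_comm]; exact h')
      exact ⟨c, h₂, h₁, dist_add_dist_eq_comm.mp h₃⟩

theorem range_eq_of_injective {x y : UTree C z} (γ : Path x y) (hγ : Function.Injective γ) :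
    range γ = {q | dist x q + dist q y = dist x y} := by
  have hsub : ∀ s t : unitInterval, IsPreconnected (γ '' Icc s t) := fun s t =>
    isPreconnected_Icc.image _ γ.continuous.continuousOn
  ext p
  refine ⟨?_, mem_of_isPreconnected_of_dist_add_dist_eq (isPreconnected_range γ.continuous)
    ⟨0, γ.source⟩ ⟨1, γ.target⟩⟩
  rintro ⟨t, rfl⟩
  by_contra hp
  obtain ⟨c, hxy, hxp, hyp⟩ := exists_median x y (γ t)
  obtain ⟨t₁, ⟨-, ht₁⟩, hc₁⟩ := mem_of_isPreconnected_of_dist_add_dist_eq (hsub 0 t)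
    ⟨0, ⟨le_rfl, unitInterval.nonneg'⟩, γ.source⟩
    (mem_image_of_mem γ ⟨unitInterval.nonneg', le_rfl⟩) hxp
  obtain ⟨t₂, ⟨ht₂, -⟩, hc₂⟩ := mem_of_isPreconnected_of_dist_add_dist_eq (hsub t 1)
    (mem_image_of_mem γ ⟨le_rfl, unitInterval.le_one'⟩)
    ⟨1, ⟨unitInterval.le_one', le_rfl⟩, γ.target⟩ (dist_add_dist_eq_comm.mp hyp)
  obtain rfl := hγ (hc₁.trans hc₂.symm)
  obtain rfl := le_antisymm ht₁ ht₂
  exact hp (hc₁ ▸ hxy)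

theorem hasUniqueArcs : HasUniqueArcs (UTree C z) := fun _ _ γ₁ γ₂ h₁ h₂ =>
  (range_eq_of_injective γ₁ h₁).trans (range_eq_of_injective γ₂ h₂).symm

theorem isRealTree : IsRealTree (UTree C z) := ⟨isGeodesicSpace, hasUniqueArcs⟩

end Arcs

section Complexity

theorem exists_Ioo_notMem_badSet {t : ℝ} (ht : t < a.ρ) :
    ∃ ε > 0, ∀ s ∈ Ioo t (t + ε), s ∉ badSet a := by
  obtain ⟨ε, hε, hconst⟩ := a.piecewise_const t ht
  refine ⟨ε, hε, fun s hs hbad => ?_⟩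
  obtain ⟨u, hu, v, hv, hne⟩ := hbad.2 (s - t) (by linarith [hs.1])
  rw [hconst u (by linarith [hu.1]) (by linarith [hu.2, hs.2]) (hu.2.trans_lt hbad.1),
    hconst v (by linarith [hv.1]) (by linarith [hv.2, hs.2]) (hv.2.trans_lt hbad.1)] at hne
  exact hne rfl

theorem countable_badSet (a : UTree C z) : (badSet a).Countable := by
  refine (countable_setOfPred_isolated_right_within (s := badSet a)).mono fun t ht => ?_
  show t ∈ badSet a ∧ _
  refine ⟨ht, ?_⟩
  obtain ⟨ε, hε, hgap⟩ := exists_Ioo_notMem_badSet ht.1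
  rw [← notMem_closure_iff_nhdsWithin_eq_bot, Metric.mem_closure_iff]
  push Not
  refine ⟨ε, hε, fun s ⟨hs, hts⟩ => ?_⟩
  rw [Real.dist_eq, abs_sub_comm, abs_of_pos (sub_pos.mpr hts)]
  by_contra h
  exact hgap s ⟨hts, by linarith⟩ hs

theorem Pset_subset_badSet_union (a : UTree C z) : Pset a ⊆ badSet a ∪ {a.ρ} := by
  intro t ht
  have hle : t ≤ a.ρ := closure_minimal (fun s hs => hs.1.le) isClosed_Iic ht
  rcases hle.lt_or_eq with hlt | rfl
  · obtain ⟨ε₀, hε₀, hgap⟩ := exists_Ioo_notMem_badSet hlt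
    refine Or.inl ⟨hlt, fun ε hε => ?_⟩
    obtain ⟨s, hs, hts⟩ := Metric.mem_closure_iff.mp ht (min ε ε₀) (lt_min hε hε₀)
    rw [Real.dist_eq, abs_lt] at hts
    have hst : s ≤ t := not_lt.mp fun h => hgap s ⟨h, by linarith [min_le_right ε ε₀]⟩ hs
    obtain ⟨u, hu, v, hv, hne⟩ := hs.2 (s - (t - ε)) (by linarith [min_le_left ε ε₀])
    exact ⟨u, ⟨by linarith [hu.1], hu.2.trans hst⟩, v, ⟨by linarith [hv.1], hv.2.trans hst⟩, hne⟩
  · exact Or.inr rfl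

theorem countable_Pset (a : UTree C z) : (Pset a).Countable :=
  ((countable_badSet a).union (countable_singleton a.ρ)).mono (Pset_subset_badSet_union a)

theorem badSet_inter_Iio_subset {s : ℝ} (h : s ≤ wedgeρ a b) : badSet a ∩ Iio s ⊆ badSet b := by
  rintro t ⟨⟨-, hjump⟩, hts : t < s⟩
  have htw : t < wedgeρ a b := hts.trans_le h
  refine ⟨htw.trans_le (wedgeρ_le_right a b), fun ε hε => ?_⟩
  obtain ⟨u, hu, v, hv, hne⟩ := hjump ε hε
  rw [agree_of_lt_wedgeρ a b (hu.2.trans_lt htw), agree_of_lt_wedgeρ a b (hv.2.trans_lt htw)]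
    at hne
  exact ⟨u, hu, v, hv, hne⟩

theorem comp_le_of_wedgeρ_eq (h : wedgeρ a b = a.ρ) : comp a ≤ comp b := by
  refine cbRank_mono isClosed_closure (countable_Pset a) isClosed_closure (countable_Pset b)
    (closure_mono fun t ht => ?_)
  exact badSet_inter_Iio_subset h.ge ⟨ht, ht.1⟩

theorem comp_le_of_dist_add_dist_eq (h : dist a q + dist q b = dist a b) :
    comp q ≤ max (comp a) (comp b) := by
  rcases le_total (wedgeρ a q) (wedgeρ q b) with hle | hle
  · exact (comp_le_of_wedgeρ_eq (wedgeρ_eq_of_dist_add_dist_eq h hle).1).trans (le_max_right _ _)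
  · rw [wedgeρ_comm a q, wedgeρ_comm q b] at hle
    exact (comp_le_of_wedgeρ_eq (wedgeρ_eq_of_dist_add_dist_eq (dist_add_dist_eq_comm.mp h)
      hle).1).trans (le_max_left _ _)

theorem metricConvex_level (z : C) (α : Ordinal) : MetricConvex (level z α) :=
  fun _ ha _ hb _ h => (comp_le_of_dist_add_dist_eq h).trans (max_le ha hb)

theorem extend_f_of_lt {v : C} {t : ℝ} (h : t < a.ρ) : (a.extend v).f t = a.f t := if_pos h

theorem extend_f_of_mem_Ico {v : C} {t : ℝ} (h : t ∈ Ico a.ρ (a.ρ + 1)) : (a.extend v).f t = v :=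
  (if_neg (not_lt.mpr h.1)).trans (if_pos h.2)

theorem wedgeρ_extend (a : UTree C z) (v : C) : wedgeρ (a.extend v) a = a.ρ :=
  le_antisymm (wedgeρ_le_right _ _) <|
    le_wedgeρ ⟨le_min (by change a.ρ ≤ a.ρ + 1; linarith) le_rfl, fun _ hu => extend_f_of_lt hu⟩

theorem badSet_extend_subset (a : UTree C z) (v : C) :
    badSet (a.extend v) ⊆ badSet a ∪ {a.ρ} := by
  intro t ht
  rcases lt_trichotomy t a.ρ with hlt | rfl | hgt
  · exact Or.inl (badSet_inter_Iio_subset (wedgeρ_extend a v).ge ⟨ht, hlt⟩)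
  · exact Or.inr rfl
  · obtain ⟨u, hu, w, hw, hne⟩ := ht.2 (t - a.ρ) (by linarith)
    have htρ : t < a.ρ + 1 := ht.1
    rw [extend_f_of_mem_Ico ⟨by linarith [hu.1], by linarith [hu.2]⟩,
      extend_f_of_mem_Ico ⟨by linarith [hw.1], by linarith [hw.2]⟩] at hne
    exact absurd rfl hne

theorem comp_extend_le (a : UTree C z) (v : C) : comp (a.extend v) ≤ max (comp a) 1 := by
  have hsub : Pset (a.extend v) ⊆ Pset a ∪ {a.ρ} := by
    rw [Pset, Pset, ← closure_singleton, ← closure_union]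
    exact closure_mono (badSet_extend_subset a v)
  exact (cbRank_mono isClosed_closure (countable_Pset _) (isClosed_closure.union isClosed_singleton)
    ((countable_Pset a).union (countable_singleton _)) hsub).trans
    (cbRank_union_singleton_le isClosed_closure (countable_Pset a) a.ρ)

end Complexity

section Valence

def branch (c : UTree C z) (o : Option C) : Set (UTree C z) := {q | q ≠ c ∧ direction c q = o}

theorem metricConvex_branch (c : UTree C z) (o : Option C) : MetricConvex (branch c o) := by
  rintro a ⟨hac, rfl⟩ b ⟨hbc, hab⟩ q hq
  obtain ⟨T, hT, haT, hqT, hTaq⟩ := isGeodesicSpace.exists_isPreconnected a q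
  have hcT : c ∉ T := fun hcT => direction_ne_of_dist_add_dist_eq
    (dist_add_dist_eq_of_dist_add_dist_eq hq (hTaq c hcT)) hac hbc hab.symm
  exact ⟨fun h => hcT (h ▸ hqT), direction_eq_of_isPreconnected hT hcT hqT haT⟩

theorem connectedComponentIn_ne_eq {S : Set (UTree C z)} (hS : MetricConvex S) {x y : S}
    (hy : y ≠ x) :
    connectedComponentIn {w | w ≠ x} y =
      Subtype.val ⁻¹' branch x (direction x (y : UTree C z)) := by
  apply subset_antisymm
  · intro q hq
    have hK := (isPreconnected_connectedComponentIn (F := {w | w ≠ x}) (x := y)).image _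
      continuous_subtype_val.continuousOn
    have hx : (x : UTree C z) ∉ Subtype.val '' connectedComponentIn {w | w ≠ x} y := by
      rintro ⟨w, hw, hwx⟩
      exact connectedComponentIn_subset _ _ hw (Subtype.ext hwx)
    exact ⟨fun h => hx ⟨q, hq, h⟩, direction_eq_of_isPreconnected hK hx (mem_image_of_mem _ hq)
      (mem_image_of_mem _ (mem_connectedComponentIn hy))⟩
  · refine IsPreconnected.subset_connectedComponentIn ?_ ⟨fun h => hy (Subtype.ext h), rfl⟩
      fun q hq h => hq.1 (congrArg Subtype.val h)
    rw [← IsInducing.subtypeVal.isPreconnected_image, image_preimage_eq_inter_range,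
      Subtype.range_coe]
    exact isGeodesicSpace.isPreconnected ((metricConvex_branch _ _).inter hS)

theorem valenceAt_eq_of_metricConvex {S : Set (UTree C z)} (hS : MetricConvex S) (x : S)
    (hbranch : ∀ o, (S ∩ branch x o).Nonempty) : valenceAt x = Cardinal.mk (Option C) := by
  choose w hwS hw using hbranch
  have hy : ∀ o, (⟨w o, hwS o⟩ : S) ≠ x := fun o h => (hw o).1 (congrArg Subtype.val h)
  have hcomp : ∀ o, connectedComponentIn {q | q ≠ x} ⟨w o, hwS o⟩ = Subtype.val ⁻¹' branch x o :=
    fun o => by rw [connectedComponentIn_ne_eq hS (hy o), (hw o).2]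
  let dir : Option C → {D : Set S // IsDirectionAt x D} := fun o => ⟨_, _, hy o, rfl⟩
  refine (Cardinal.mk_congr (Equiv.ofBijective dir ⟨fun o o' h => ?_, ?_⟩)).symm
  · have h' := congrArg Subtype.val h
    simp only [dir, hcomp] at h'
    have hmem : (⟨w o, hwS o⟩ : S) ∈ Subtype.val ⁻¹' branch (x : UTree C z) o' := h' ▸ hw o
    exact (hw o).2.symm.trans hmem.2
  · rintro ⟨D, q, hq, rfl⟩
    exact ⟨direction x (q : UTree C z),
      Subtype.ext ((hcomp _).trans (connectedComponentIn_ne_eq hS hq).symm)⟩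

theorem valenceAt_level {α : Ordinal} (hα : 1 ≤ α) (x : level z α) :
    valenceAt x = Cardinal.mk C + 1 := by
  rw [valenceAt_eq_of_metricConvex (metricConvex_level z α) x, Cardinal.mk_option]
  rintro (_ | v)
  · have h : direction x (cconst ((x : UTree C z).ρ - 1)) = none :=
      direction_of_lt ((wedgeρ_le_left _ _).trans_lt
        (by change (x : UTree C z).ρ - 1 < (x : UTree C z).ρ; linarith))
    exact ⟨_, cconst_mem_level α, ne_of_direction_eq_none h, h⟩
  · refine ⟨(x : UTree C z).extend v, (comp_extend_le _ v).trans (max_le x.2 hα), fun h => ?_,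
      direction_eq_some_iff.mpr ⟨(wedgeρ_extend _ v).ge, extend_f_of_mem_Ico ⟨le_rfl, by linarith⟩⟩⟩
    have := congrArg ρ h
    change (x : UTree C z).ρ + 1 = _ at this
    linarith

end Valence

end UTree

theorem stmt6_general (κ : Cardinal) (C : Type) (z : C) (hC : IsLabelSet κ C)
    (α : Ordinal) (hα1 : 1 ≤ α) :
    IsRealTree ↥(UTree.level z α) ∧
    ∀ x : ↥(UTree.level z α), valenceAt x = κ := by
  refine ⟨UTree.isRealTree.subtype (UTree.metricConvex_level z α), fun x => ?_⟩
  rw [UTree.valenceAt_level hα1 x]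
  rcases lt_or_ge κ Cardinal.aleph0 with h | h
  · exact hC.2 h
  · rw [hC.1 h, Cardinal.add_one_eq h]

/-- For `κ ≥ 3` and a countable ordinal `α ≥ 1`, `(T_κ^{[α]}, d)` is a real tree and every
point of `T_κ^{[α]}` has valence `κ`. -/
theorem stmt6 (κ : Cardinal) (hκ : 3 ≤ κ) (C : Type) (z : C) (hC : IsLabelSet κ C)
    (α : Ordinal) (hα1 : 1 ≤ α) (hαc : IsCountableOrdinal α) :
    IsRealTree ↥(UTree.level z α) ∧
    ∀ x : ↥(UTree.level z α), valenceAt x = κ :=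
  stmt6_general κ C z hC α hα1

end
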